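/- Let x be a positive solution of the delay differential equation and set v(t) := V(x(t)). If t > τ and r ≥ 0 are such that v(s) ≤ r for all s ∈ [t−τ, t] and v'(t) ≥ 0, then v(t) ≤ F*(t, r). -/

import Mathlib

open Filter Set RealInnerProductSpace

/-- F(t,x,y) = ⟨∇V(x), f(t,x,y)⟩ + a(t)·V(x). -/
noncomputable def Ffun (N : ℕ)
    (f : ℝ → EuclideanSpace ℝ (Fin N) → EuclideanSpace ℝ (Fin N) → EuclideanSpace ℝ (Fin N))
    (V : EuclideanSpace ℝ (Fin N) → ℝ) (a : ℝ → ℝ)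
    (t : ℝ) (u v : EuclideanSpace ℝ (Fin N)) : ℝ :=
  ⟪gradient V u, f t u v⟫ + a t * V u

/-- The set of values F(t,x,y)/a(t) over nonnegative x, y with V(x), V(y) ≤ r. -/
def FstarSet (N : ℕ)
    (f : ℝ → EuclideanSpace ℝ (Fin N) → EuclideanSpace ℝ (Fin N) → EuclideanSpace ℝ (Fin N))
    (V : EuclideanSpace ℝ (Fin N) → ℝ) (a : ℝ → ℝ) (t r : ℝ) : Set ℝ :=
  {z | ∃ u v : EuclideanSpace ℝ (Fin N), (∀ i, 0 ≤ u i) ∧ (∀ i, 0 ≤ v i) ∧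
    V u ≤ r ∧ V v ≤ r ∧ z = Ffun N f V a t u v / a t}

/-- F*(t,r) = sup { F(t,x,y)/a(t) : x, y ≥ 0, V(x) ≤ r, V(y) ≤ r }. -/
noncomputable def Fstar (N : ℕ)
    (f : ℝ → EuclideanSpace ℝ (Fin N) → EuclideanSpace ℝ (Fin N) → EuclideanSpace ℝ (Fin N))
    (V : EuclideanSpace ℝ (Fin N) → ℝ) (a : ℝ → ℝ) (t r : ℝ) : ℝ :=
  sSup (FstarSet N f V a t r)

theorem HasGradientAt.comp_hasDerivAt {E : Type*} [NormedAddCommGroup E]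
    [InnerProductSpace ℝ E] [CompleteSpace E] {V : E → ℝ} {V' : E} {x : ℝ → E} {x' : E} {t : ℝ}
    (hV : HasGradientAt V V' (x t)) (hx : HasDerivAt x x' t) :
    HasDerivAt (fun s => V (x s)) ⟪V', x'⟫ t := by
  simpa [InnerProductSpace.toDual_apply_apply, Function.comp_def] using
    hV.hasFDerivAt.comp_hasDerivAt t hx

section Fstar

variable {N : ℕ}
    {f : ℝ → EuclideanSpace ℝ (Fin N) → EuclideanSpace ℝ (Fin N) → EuclideanSpace ℝ (Fin N)}
    {V : EuclideanSpace ℝ (Fin N) → ℝ} {a : ℝ → ℝ} {t r : ℝ} {u w : EuclideanSpace ℝ (Fin N)}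

theorem le_Ffun_div_of_inner_nonneg (hat : 0 < a t) (hinner : 0 ≤ ⟪gradient V u, f t u w⟫) :
    V u ≤ Ffun N f V a t u w / a t := by
  rw [le_div_iff₀ hat, Ffun]
  linarith [mul_comm (V u) (a t)]

theorem Ffun_div_le_Fstar (hbdd : BddAbove (FstarSet N f V a t r))
    (hu : ∀ i, 0 ≤ u i) (hw : ∀ i, 0 ≤ w i) (hVu : V u ≤ r) (hVw : V w ≤ r) :
    Ffun N f V a t u w / a t ≤ Fstar N f V a t r :=
  le_csSup hbdd ⟨u, w, hu, hw, hVu, hVw, rfl⟩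

end Fstar

theorem value_bounded_by_Fstar_general
(N : ℕ) (τ : ℝ) (hτ : 0 < τ)
    (f : ℝ → EuclideanSpace ℝ (Fin N) → EuclideanSpace ℝ (Fin N) → EuclideanSpace ℝ (Fin N))
    (V : EuclideanSpace ℝ (Fin N) → ℝ)
    (hVC1 : ContDiff ℝ 1 V)
    (a : ℝ → ℝ) (hapos : ∀ t, 0 ≤ t → 0 < a t)
(x : ℝ → EuclideanSpace ℝ (Fin N))
    (hxpos : ∀ t, -τ ≤ t → ∀ j, 0 < x t j)
    (hxde : ∀ t, 0 < t → HasDerivAt x (f t (x t) (x (t - τ))) t)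
    (t r : ℝ) (ht : τ < t)
    (hbdd : BddAbove (FstarSet N f V a t r))
    (hvr : ∀ s ∈ Icc (t - τ) t, V (x s) ≤ r)
    (hv' : 0 ≤ deriv (fun s => V (x s)) t) :
    V (x t) ≤ Fstar N f V a t r := by
  have ht0 : 0 < t := hτ.trans ht
  have hderiv : deriv (fun s => V (x s)) t = ⟪gradient V (x t), f t (x t) (x (t - τ))⟫ :=
    (((hVC1.differentiable one_ne_zero) (x t)).hasGradientAt.comp_hasDerivAt (hxde t ht0)).deriv
  have hnonneg : ∀ s, t - τ ≤ s → ∀ i, 0 ≤ x s i := fun s hs i => (hxpos s (by linarith) i).le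
  calc V (x t) ≤ Ffun N f V a t (x t) (x (t - τ)) / a t :=
        le_Ffun_div_of_inner_nonneg (hapos t ht0.le) (hderiv ▸ hv')
    _ ≤ Fstar N f V a t r :=
        Ffun_div_le_Fstar hbdd (hnonneg t (by linarith)) (hnonneg (t - τ) le_rfl)
          (hvr t ⟨by linarith, le_rfl⟩) (hvr (t - τ) ⟨le_rfl, by linarith⟩)

/-- if v(s) = V(x(s)) ≤ r on [t−τ, t] and v'(t) ≥ 0, then v(t) ≤ F*(t,r). -/
theorem value_bounded_by_Fstar
(N : ℕ) (hN : 1 ≤ N) (τ : ℝ) (hτ : 0 < τ)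
    (f : ℝ → EuclideanSpace ℝ (Fin N) → EuclideanSpace ℝ (Fin N) → EuclideanSpace ℝ (Fin N))
    (hf : ContinuousOn
      (fun p : ℝ × EuclideanSpace ℝ (Fin N) × EuclideanSpace ℝ (Fin N) => f p.1 p.2.1 p.2.2)
      {p | 0 ≤ p.1 ∧ (∀ j, 0 ≤ p.2.1 j) ∧ (∀ j, 0 ≤ p.2.2 j)})
    (V : EuclideanSpace ℝ (Fin N) → ℝ)
    (hVC1 : ContDiff ℝ 1 V) (hV0 : V 0 = 0) (hVnn : ∀ u, 0 ≤ V u)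
    (hVpos : ∀ u : EuclideanSpace ℝ (Fin N), (∀ i, 0 ≤ u i) → u ≠ 0 → 0 < V u)
    (hVtend : Tendsto V (nhds 0) (nhds 0))
    (a : ℝ → ℝ) (hac : ContinuousOn a (Ici 0)) (hapos : ∀ t, 0 ≤ t → 0 < a t)
(x : ℝ → EuclideanSpace ℝ (Fin N))
    (hxc : ContinuousOn x (Ici (-τ)))
    (hxpos : ∀ t, -τ ≤ t → ∀ j, 0 < x t j)
    (hxde : ∀ t, 0 < t → HasDerivAt x (f t (x t) (x (t - τ))) t)
    (t r : ℝ) (ht : τ < t) (hr : 0 ≤ r)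
    (hbdd : BddAbove (FstarSet N f V a t r))
    (hvr : ∀ s ∈ Icc (t - τ) t, V (x s) ≤ r)
    (hv' : 0 ≤ deriv (fun s => V (x s)) t) :
    V (x t) ≤ Fstar N f V a t r :=
  value_bounded_by_Fstar_general N τ hτ f V hVC1 a hapos x hxpos hxde t r ht hbdd hvr hv'
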